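/- arXiv:2410.22269 — 3 statements merged into one kernel-verified Lean document; each statement's English description precedes it below -/
import Mathlib

section
/- Let m ≥ 1 be an integer, let σ > 0, let z ∈ ℝ, and let f : ℝ → ℝ be nonnegative, continuously differentiable, and 2-periodic. Then, with P_1(s) = s − ⌊s⌋ − 1/2, the Euler–Maclaurin error term satisfies |(1/S(m,σ)) ∫_{−m}^{m} (d/ds)[G_σ(s) f(z − 2s/m)] · P_1(s) ds| ≤ (m/(2σ²)) · (g̃_σ ∗ f)(z) + (1/m) · (g̃_σ ∗ |f′|)(z). -/
/-- Gaussian density with standard deviation `σ`. -/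
noncomputable def G (σ z : ℝ) : ℝ :=
  Real.exp (-z ^ 2 / (2 * σ ^ 2)) / (Real.sqrt (2 * Real.pi) * σ)

/-- Normalization constant `S(m,σ) = ∑_{k=1-m}^{m-1} G_σ(k)`. -/
noncomputable def S (m : ℕ) (σ : ℝ) : ℝ :=
  ∑ k ∈ Finset.Icc (1 - (m : ℤ)) ((m : ℤ) - 1), G σ (k : ℝ)

/-- Continuous Gaussian filter `g̃_σ(u) = (m/(2S(m,σ))) G_σ(mu/2)`. -/
noncomputable def contFilter (m : ℕ) (σ : ℝ) (u : ℝ) : ℝ :=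
  (m / (2 * S m σ)) * G σ (m * u / 2)

/-- Continuous convolution `(g̃_σ ∗ f)(z) = ∫_{-2}^{2} g̃_σ(u) f(z-u) du`. -/
noncomputable def contConv (m : ℕ) (σ : ℝ) (f : ℝ → ℝ) (z : ℝ) : ℝ :=
  ∫ u in (-2 : ℝ)..2, contFilter m σ u * f (z - u)

/-- Periodized Bernoulli polynomial `P₁(s) = s - ⌊s⌋ - 1/2`. -/
noncomputable def P1 (s : ℝ) : ℝ := s - ⌊s⌋ - 1 / 2

/-- Euler–Maclaurin error term. -/
noncomputable def eulerErr (m : ℕ) (σ : ℝ) (f : ℝ → ℝ) (z : ℝ) : ℝ :=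
  (1 / S m σ) *
    ∫ s in (-(m : ℝ))..(m : ℝ), deriv (fun s : ℝ => G σ s * f (z - 2 * s / m)) s * P1 s

/-! Bound the integrand pointwise: `|P₁| ≤ 1/2`, `|G_σ'(s)| = |s| G_σ(s)/σ² ≤ m G_σ(s)/σ²` on
`[-m, m]`, and the chain rule through `s ↦ z - 2s/m` contributes the factor `2/m`. The substitution
`u = 2s/m` identifies `(1/S) ∫_{-m}^{m} G_σ(s) g(z - 2s/m) ds` with `(g̃_σ ∗ g)(z)`. -/

lemma G_pos {σ : ℝ} (hσ : 0 < σ) (x : ℝ) : 0 < G σ x := by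
  have : 0 < Real.sqrt (2 * Real.pi) := Real.sqrt_pos.2 (by positivity)
  unfold G
  positivity

lemma continuous_G (σ : ℝ) : Continuous (G σ) := by
  unfold G
  fun_prop

lemma hasDerivAt_G (σ s : ℝ) : HasDerivAt (G σ) (-s / σ ^ 2 * G σ s) s := by
  have hexp : HasDerivAt (fun x : ℝ => -x ^ 2 / (2 * σ ^ 2)) (-s / σ ^ 2) s :=
    ((hasDerivAt_pow 2 s).neg.div_const _).congr_deriv (by ring)
  exact (hexp.exp.div_const _).congr_deriv (by unfold G; ring)

lemma S_pos {m : ℕ} (hm : 1 ≤ m) {σ : ℝ} (hσ : 0 < σ) : 0 < S m σ :=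
  Finset.sum_pos (fun _ _ => G_pos hσ _) ⟨0, by simp only [Finset.mem_Icc]; omega⟩

lemma P1_eq_fract_sub (s : ℝ) : P1 s = Int.fract s - 1 / 2 := by
  rw [P1, ← Int.self_sub_floor]

lemma abs_P1_le (s : ℝ) : |P1 s| ≤ 1 / 2 := by
  rw [P1_eq_fract_sub, abs_le]
  constructor <;> linarith [Int.fract_nonneg s, Int.fract_lt_one s]

lemma contConv_eq_integral_G {m : ℕ} (hm : m ≠ 0) (σ : ℝ) (g : ℝ → ℝ) (z : ℝ) :
    contConv m σ g z = 1 / S m σ * ∫ s in (-(m : ℝ))..m, G σ s * g (z - 2 * s / m) := by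
  have hm' : (m : ℝ) / 2 ≠ 0 := by positivity
  have hsubst := intervalIntegral.integral_comp_mul_left
    (fun s => G σ s * g (z - 2 * s / m)) hm' (a := -2) (b := 2)
  rw [show (m : ℝ) / 2 * -2 = -m by ring, show (m : ℝ) / 2 * 2 = m by ring] at hsubst
  have hintegrand : ∀ u : ℝ, G σ (m / 2 * u) * g (z - 2 * (m / 2 * u) / m) =
      G σ (m * u / 2) * g (z - u) := fun u => by
    rw [show z - 2 * (m / 2 * u) / m = z - u by field_simp,
      show (m : ℝ) / 2 * u = m * u / 2 by ring]
  simp only [hintegrand, smul_eq_mul] at hsubst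
  unfold contConv contFilter
  simp_rw [mul_assoc, intervalIntegral.integral_const_mul, hsubst]
  field_simp

lemma hasDerivAt_G_mul_comp {σ : ℝ} {f : ℝ → ℝ} (m : ℕ) (z s : ℝ)
    (hf : DifferentiableAt ℝ f (z - 2 * s / m)) :
    HasDerivAt (fun s => G σ s * f (z - 2 * s / m))
      (-s / σ ^ 2 * G σ s * f (z - 2 * s / m) + G σ s * (deriv f (z - 2 * s / m) * -(2 / m)))
      s := by
  have hlin : HasDerivAt (fun s : ℝ => z - 2 * s / m) (-(2 / m)) s := by
    simpa using (((hasDerivAt_id s).const_mul (2 : ℝ)).div_const (m : ℝ)).const_sub z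
  exact (hasDerivAt_G σ s).mul (hf.hasDerivAt.comp s hlin)

lemma abs_deriv_G_mul_comp_mul_P1_le {m : ℕ} (hm : 0 < (m : ℝ)) {σ : ℝ} (hσ : 0 < σ)
    {f : ℝ → ℝ} {z s : ℝ} (hs : |s| ≤ m) (hf0 : 0 ≤ f (z - 2 * s / m))
    (hf : DifferentiableAt ℝ f (z - 2 * s / m)) :
    |deriv (fun s => G σ s * f (z - 2 * s / m)) s * P1 s| ≤
      m / (2 * σ ^ 2) * (G σ s * f (z - 2 * s / m))
        + 1 / m * (G σ s * |deriv f (z - 2 * s / m)|) := by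
  set w := z - 2 * s / m
  have hG := G_pos hσ s
  have hgauss : |-s / σ ^ 2 * G σ s * f w| ≤ m / σ ^ 2 * (G σ s * f w) := by
    rw [abs_mul, abs_mul, abs_div, abs_neg, abs_of_nonneg hf0, abs_of_pos hG,
      abs_of_pos (pow_pos hσ 2), mul_assoc]
    gcongr
  have hchain : |G σ s * (deriv f w * -(2 / m))| = 2 / m * (G σ s * |deriv f w|) := by
    rw [abs_mul, abs_mul, abs_neg, abs_of_pos hG, abs_of_pos (by positivity : 0 < 2 / (m : ℝ))]
    ring
  have hderiv : |deriv (fun s => G σ s * f (z - 2 * s / m)) s| ≤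
      m / σ ^ 2 * (G σ s * f w) + 2 / m * (G σ s * |deriv f w|) := by
    rw [(hasDerivAt_G_mul_comp m z s hf).deriv, ← hchain]
    exact (abs_add_le _ _).trans (add_le_add_left hgauss _)
  calc |deriv (fun s => G σ s * f (z - 2 * s / m)) s * P1 s|
      ≤ (m / σ ^ 2 * (G σ s * f w) + 2 / m * (G σ s * |deriv f w|)) * (1 / 2) := by
        rw [abs_mul]
        exact mul_le_mul hderiv (abs_P1_le s) (abs_nonneg _) ((abs_nonneg _).trans hderiv)
    _ = m / (2 * σ ^ 2) * (G σ s * f w) + 1 / m * (G σ s * |deriv f w|) := by ring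

lemma abs_integral_deriv_G_mul_comp_mul_P1_le {m : ℕ} (hm : 0 < (m : ℝ)) {σ : ℝ} (hσ : 0 < σ)
    {f : ℝ → ℝ} (hf0 : ∀ x, 0 ≤ f x) (hf : ContDiff ℝ 1 f) (z : ℝ) :
    |∫ s in (-(m : ℝ))..m, deriv (fun s => G σ s * f (z - 2 * s / m)) s * P1 s| ≤
      m / (2 * σ ^ 2) * (∫ s in (-(m : ℝ))..m, G σ s * f (z - 2 * s / m))
        + 1 / m * ∫ s in (-(m : ℝ))..m, G σ s * |deriv f (z - 2 * s / m)| := by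
  have hG := continuous_G σ
  have hfc := hf.continuous
  have hdfc := hf.continuous_deriv le_rfl
  have hGf : Continuous fun s => G σ s * f (z - 2 * s / m) := by fun_prop
  have hGdf : Continuous fun s => G σ s * |deriv f (z - 2 * s / m)| := by fun_prop
  rw [← intervalIntegral.integral_const_mul, ← intervalIntegral.integral_const_mul,
    ← intervalIntegral.integral_add ((hGf.const_mul _).intervalIntegrable _ _)
      ((hGdf.const_mul _).intervalIntegrable _ _), ← Real.norm_eq_abs]
  refine intervalIntegral.norm_integral_le_of_norm_le (by linarith)
    (Filter.Eventually.of_forall fun s hs => ?_) ?_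
  · exact abs_deriv_G_mul_comp_mul_P1_le hm hσ (abs_le.2 ⟨hs.1.le, hs.2⟩) (hf0 _)
      (hf.differentiable one_ne_zero _)
  · exact ((hGf.const_mul _).add (hGdf.const_mul _)).intervalIntegrable _ _

theorem eulerErr_bound_general
    (m : ℕ) (hm : 1 ≤ m) (σ : ℝ) (hσ : 0 < σ) (z : ℝ)
    (f : ℝ → ℝ) (hf0 : ∀ x : ℝ, 0 ≤ f x) (hf : ContDiff ℝ 1 f) :
    |eulerErr m σ f z| ≤
      ((m : ℝ) / (2 * σ ^ 2)) * contConv m σ f z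
        + (1 / (m : ℝ)) * contConv m σ (fun x => |deriv f x|) z := by
  have hS := S_pos hm hσ
  rw [eulerErr, abs_mul, abs_of_pos (one_div_pos.2 hS), contConv_eq_integral_G (by omega),
    contConv_eq_integral_G (by omega)]
  calc 1 / S m σ * |∫ s in (-(m : ℝ))..m, deriv (fun s => G σ s * f (z - 2 * s / m)) s * P1 s|
      ≤ 1 / S m σ * (m / (2 * σ ^ 2) * (∫ s in (-(m : ℝ))..m, G σ s * f (z - 2 * s / m))
        + 1 / m * ∫ s in (-(m : ℝ))..m, G σ s * |deriv f (z - 2 * s / m)|) := by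
        gcongr
        exact abs_integral_deriv_G_mul_comp_mul_P1_le (by exact_mod_cast hm) hσ hf0 hf z
    _ = _ := by ring

/-- the Euler–Maclaurin error term satisfies
`|E(m,σ)| ≤ (m/(2σ²)) (g̃_σ ∗ f)(z) + (1/m) (g̃_σ ∗ |f'|)(z)`. -/
theorem eulerErr_bound
    (m : ℕ) (hm : 1 ≤ m) (σ : ℝ) (hσ : 0 < σ) (z : ℝ)
    (f : ℝ → ℝ) (hf0 : ∀ x : ℝ, 0 ≤ f x) (hf : ContDiff ℝ 1 f)
    (hper : ∀ x : ℝ, f (x + 2) = f x) :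
    |eulerErr m σ f z| ≤
      ((m : ℝ) / (2 * σ ^ 2)) * contConv m σ f z
        + (1 / (m : ℝ)) * contConv m σ (fun x => |deriv f x|) z :=
  eulerErr_bound_general m hm σ hσ z f hf0 hf
end

section
/- Let N ≥ 0 be an integer and let a_0, …, a_N ∈ ℂ, not all zero. Define c_k = ∑_{ℓ=0}^{N−k} a_ℓ · conj(a_{ℓ+k}) for 0 ≤ k ≤ N (so c_0 = ∑_{ℓ=0}^{N} |a_ℓ|² is real and positive), and define p : ℝ → ℝ by p(z) = 1/2 + Re(∑_{k=1}^{N} (c_k/c_0) e^{iπkz}). Then p is a probability density on [−1,1]: p(z) ≥ 0 for all z ∈ ℝ, and ∫_{−1}^{1} p(z) dz = 1. Moreover p(z) = |∑_{ℓ=0}^{N} a_ℓ e^{−iπℓz}|² / (2 c_0). -/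
/-!
Put `u = e^{iπz}`, so that `conj u = u⁻¹`. Expanding `|∑ a_ℓ conj(u)^ℓ|²` as a double sum and
grouping its terms by the lag `k = m - ℓ`, the terms of lag `k` add up to `c_k u^k` and their
mirror images to `conj (c_k u^k)`; hence `|∑ a_ℓ conj(u)^ℓ|² = c_0 + 2 Re ∑_{k ≥ 1} c_k u^k`,
which is `2 c_0 p(z)`. This gives the closed form and nonnegativity; the integral is `1` because
each `e^{iπkz}` with `k ≠ 0` has mean zero over the period `[-1, 1]`.
-/

open Complex ComplexConjugate Finset MeasureTheory
open scoped Real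

section DoubleSums

variable {M : Type*} [AddCommMonoid M]

theorem Finset.sum_range_sum_range_eq_diag_add_triangle (n : ℕ) (g : ℕ → ℕ → M) :
    ∑ l ∈ range n, ∑ m ∈ range n, g l m =
      ∑ l ∈ range n, g l l + ∑ m ∈ range n, ∑ l ∈ range m, (g l m + g m l) := by
  induction n with
  | zero => simp
  | succ n ih =>
    simp only [sum_range_succ, sum_add_distrib] at ih ⊢
    rw [ih]
    abel

theorem Finset.sum_Icc_sum_range_add_eq_sum_range_sum_range (n : ℕ) (f : ℕ → ℕ → M) :
    ∑ k ∈ Icc 1 n, ∑ l ∈ range (n + 1 - k), f l (l + k) =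
      ∑ m ∈ range (n + 1), ∑ l ∈ range m, f l m := by
  rw [sum_sigma', sum_sigma']
  refine sum_nbij' (fun x ↦ ⟨x.2 + x.1, x.2⟩) (fun x ↦ ⟨x.1 - x.2, x.2⟩) ?_ ?_ ?_ ?_
    fun _ _ ↦ rfl
  all_goals
    rintro ⟨_, _⟩ h
    simp only [mem_sigma, mem_Icc, mem_range, Sigma.mk.injEq, heq_eq_eq, and_true] at h ⊢
    omega

theorem Finset.sum_range_sum_range_eq_diag_add_sum_lag (n : ℕ) (g : ℕ → ℕ → M) :
    ∑ l ∈ range (n + 1), ∑ m ∈ range (n + 1), g l m =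
      ∑ l ∈ range (n + 1), g l l +
        ∑ k ∈ Icc 1 n, ∑ l ∈ range (n + 1 - k), (g l (l + k) + g (l + k) l) := by
  rw [sum_range_sum_range_eq_diag_add_triangle,
    sum_Icc_sum_range_add_eq_sum_range_sum_range n fun l m ↦ g l m + g m l]

end DoubleSums

noncomputable def autocorrelation (N : ℕ) (a : ℕ → ℂ) (k : ℕ) : ℂ :=
  ∑ l ∈ range (N + 1 - k), a l * conj (a (l + k))

section Autocorrelation

variable (N : ℕ) (a : ℕ → ℂ)

theorem autocorrelation_zero :
    autocorrelation N a 0 = ((∑ l ∈ range (N + 1), normSq (a l) : ℝ) : ℂ) := by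
  simp only [autocorrelation, Nat.sub_zero, add_zero, ofReal_sum, mul_conj]

theorem re_autocorrelation_zero :
    (autocorrelation N a 0).re = ∑ l ∈ range (N + 1), normSq (a l) := by
  rw [autocorrelation_zero, ofReal_re]

variable {N a}

theorem re_autocorrelation_zero_pos (ha : ∃ l ≤ N, a l ≠ 0) :
    0 < (autocorrelation N a 0).re := by
  obtain ⟨l, hlN, hl⟩ := ha
  rw [re_autocorrelation_zero]
  exact sum_pos' (fun _ _ ↦ normSq_nonneg _)
    ⟨l, mem_range.mpr (Nat.lt_succ_of_le hlN), normSq_pos.mpr hl⟩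

theorem sum_mul_conj_pow_mul_conj {u : ℂ} (hu : ‖u‖ = 1) :
    (∑ l ∈ range (N + 1), a l * conj u ^ l) * conj (∑ l ∈ range (N + 1), a l * conj u ^ l) =
      autocorrelation N a 0 + ∑ k ∈ Icc 1 N,
        (autocorrelation N a k * u ^ k + conj (autocorrelation N a k * u ^ k)) := by
  have hu' : conj u * u = 1 := by
    rw [mul_comm, mul_conj, normSq_eq_norm_sq, hu]; norm_num
  set g : ℕ → ℕ → ℂ := fun l m ↦ a l * conj u ^ l * conj (a m * conj u ^ m)
  have hlag (l k : ℕ) : g l (l + k) = a l * conj (a (l + k)) * u ^ k := by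
    simp only [g, map_mul, map_pow, conj_conj]
    calc _ = a l * conj (a (l + k)) * (conj u * u) ^ l * u ^ k := by ring
      _ = _ := by rw [hu', one_pow, mul_one]
  have hdiag (l : ℕ) : g l l = a l * conj (a l) := by simpa using hlag l 0
  have hlag_symm (l k : ℕ) : g (l + k) l = conj (g l (l + k)) := by
    simp only [g, map_mul, map_pow, conj_conj]; ring
  have hexpand : (∑ l ∈ range (N + 1), a l * conj u ^ l) *
      conj (∑ l ∈ range (N + 1), a l * conj u ^ l) =
        ∑ l ∈ range (N + 1), ∑ m ∈ range (N + 1), g l m := by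
    rw [map_sum, sum_mul_sum]
  rw [hexpand, sum_range_sum_range_eq_diag_add_sum_lag]
  simp only [hlag_symm, hlag, hdiag, autocorrelation, Nat.sub_zero, add_zero, sum_mul, map_sum,
    sum_add_distrib]

theorem normSq_sum_mul_conj_pow {u : ℂ} (hu : ‖u‖ = 1) :
    normSq (∑ l ∈ range (N + 1), a l * conj u ^ l) =
      (autocorrelation N a 0).re + 2 * (∑ k ∈ Icc 1 N, autocorrelation N a k * u ^ k).re := by
  rw [← ofReal_re (normSq _), ← mul_conj, sum_mul_conj_pow_mul_conj hu, add_re, re_sum,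
    re_sum, mul_sum]
  simp only [add_re, conj_re, two_mul]

end Autocorrelation

theorem half_add_re_sum_div_autocorrelation_zero {N : ℕ} {a : ℕ → ℂ} (ha : ∃ l ≤ N, a l ≠ 0)
    {u : ℂ} (hu : ‖u‖ = 1) :
    1 / 2 + (∑ k ∈ Icc 1 N, autocorrelation N a k / autocorrelation N a 0 * u ^ k).re =
      ‖∑ l ∈ range (N + 1), a l * conj u ^ l‖ ^ 2 / (2 * (autocorrelation N a 0).re) := by
  have hr := re_autocorrelation_zero_pos ha
  have hc₀ : autocorrelation N a 0 = ((autocorrelation N a 0).re : ℂ) := by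
    rw [autocorrelation_zero, ofReal_re]
  have hsum : ∑ k ∈ Icc 1 N, autocorrelation N a k / autocorrelation N a 0 * u ^ k =
      (∑ k ∈ Icc 1 N, autocorrelation N a k * u ^ k) / ((autocorrelation N a 0).re : ℂ) := by
    rw [← hc₀, sum_div]
    exact sum_congr rfl fun _ _ ↦ div_mul_eq_mul_div _ _ _
  rw [hsum, div_ofReal_re, ← normSq_eq_norm_sq, normSq_sum_mul_conj_pow hu]
  field_simp

theorem integral_exp_I_pi_int_mul_eq_zero {k : ℤ} (hk : k ≠ 0) :
    ∫ z in (-1 : ℝ)..1, exp (I * π * k * z) = 0 := by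
  have hc : I * π * k ≠ 0 := by simp [I_ne_zero, Real.pi_ne_zero, hk]
  have hperiod : exp (I * π * k * 1) = exp (I * π * k * (-1)) * exp (k * (2 * π * I)) := by
    rw [← exp_add]; ring_nf
  rw [integral_exp_mul_complex hc, ofReal_one, ofReal_neg, ofReal_one, hperiod,
    exp_int_mul_two_pi_mul_I, mul_one, sub_self, zero_div]

theorem integral_const_add_re_sum_mul_exp_I_pi (C : ℝ) (N : ℕ) (b : ℕ → ℂ) :
    ∫ z in (-1 : ℝ)..1, (C + (∑ k ∈ Icc 1 N, b k * exp (I * π * k * z)).re) = 2 * C := by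
  have hcont : Continuous fun z : ℝ ↦ ∑ k ∈ Icc 1 N, b k * exp (I * π * k * z) := by fun_prop
  have hmean : ∫ z in (-1 : ℝ)..1, ∑ k ∈ Icc 1 N, b k * exp (I * π * k * z) = 0 := by
    rw [intervalIntegral.integral_finsetSum fun k _ ↦
      (by fun_prop : Continuous _).intervalIntegrable _ _]
    refine sum_eq_zero fun k hk ↦ ?_
    have hk : (k : ℤ) ≠ 0 := by have := (mem_Icc.mp hk).1; omega
    rw [intervalIntegral.integral_const_mul, ← Int.cast_natCast,
      integral_exp_I_pi_int_mul_eq_zero hk, mul_zero]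
  have hmean_re :=
    intervalIntegral.intervalIntegral_re (μ := volume) (hcont.intervalIntegrable (-1) 1)
  simp only [RCLike.re_to_complex, hmean, zero_re] at hmean_re
  have hcont_re : Continuous fun z : ℝ ↦ (∑ k ∈ Icc 1 N, b k * exp (I * π * k * z)).re :=
    continuous_re.comp hcont
  rw [intervalIntegral.integral_add intervalIntegrable_const (hcont_re.intervalIntegrable _ _),
    hmean_re, intervalIntegral.integral_const]
  norm_num

/-- the Fourier head's learned function is a valid probability density:
with `c_k = ∑_{ℓ=0}^{N-k} a_ℓ conj(a_{ℓ+k})` and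
`p(z) = 1/2 + Re(∑_{k=1}^{N} (c_k/c_0) e^{iπkz})`, the function `p` is nonnegative,
integrates to `1` over `[-1,1]`, and equals `|∑_{ℓ=0}^{N} a_ℓ e^{-iπℓz}|² / (2c_0)`. -/
theorem fourier_head_pdf
    (N : ℕ) (a : ℕ → ℂ) (ha : ∃ l ≤ N, a l ≠ 0) (c : ℕ → ℂ)
    (hc : ∀ k : ℕ, k ≤ N →
      c k = ∑ l ∈ Finset.range (N + 1 - k), a l * starRingEnd ℂ (a (l + k)))
    (p : ℝ → ℝ)
    (hp : ∀ z : ℝ, p z = 1 / 2 +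
      (∑ k ∈ Finset.Icc 1 N,
        (c k / c 0) * Complex.exp (Complex.I * (Real.pi : ℂ) * (k : ℂ) * (z : ℂ))).re) :
    (∀ z : ℝ, 0 ≤ p z) ∧
    (∫ z in (-1 : ℝ)..1, p z) = 1 ∧
    (∀ z : ℝ, p z =
      ‖∑ l ∈ Finset.range (N + 1),
          a l * Complex.exp (-(Complex.I) * (Real.pi : ℂ) * (l : ℂ) * (z : ℂ))‖ ^ 2 /
        (2 * (c 0).re)) := by
  have hc' : ∀ k ≤ N, c k = autocorrelation N a k := hc
  have hc₀ : c 0 = autocorrelation N a 0 := hc' 0 N.zero_le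
  have hp_sq : ∀ z : ℝ, p z =
      ‖∑ l ∈ range (N + 1), a l * exp (-I * π * l * z)‖ ^ 2 / (2 * (c 0).re) := by
    intro z
    set u : ℂ := exp (↑(π * z) * I) with hu_def
    have hu : ‖u‖ = 1 := norm_exp_ofReal_mul_I _
    have hpow (k : ℕ) : exp (I * π * k * z) = u ^ k := by
      rw [hu_def, ← exp_nat_mul]; push_cast; ring_nf
    have hconj_pow (l : ℕ) : exp (-I * π * l * z) = conj u ^ l := by
      rw [hu_def, ← exp_conj, ← exp_nat_mul, map_mul, conj_ofReal, conj_I]; push_cast; ring_nf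
    have hsum : ∑ k ∈ Icc 1 N, c k / c 0 * exp (I * π * k * z) =
        ∑ k ∈ Icc 1 N, autocorrelation N a k / autocorrelation N a 0 * u ^ k :=
      sum_congr rfl fun k hk ↦ by rw [hc' k (mem_Icc.mp hk).2, hc₀, hpow]
    rw [hp z, hsum, hc₀, half_add_re_sum_div_autocorrelation_zero ha hu]
    simp only [hconj_pow]
  refine ⟨fun z ↦ ?_, ?_, hp_sq⟩
  · rw [hp_sq z, hc₀]
    have := re_autocorrelation_zero_pos ha
    positivity
  · simp only [hp, integral_const_add_re_sum_mul_exp_I_pi]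
    norm_num
end

section
/- Let m and N be integers with 0 < N < m/2, let σ > 0, let B ∈ ℝ, and let f_N(z) = ∑_{k=−N}^{N} a_k e^{iπkz} be a trigonometric polynomial with a_{−k} = conj(a_k) (so f_N is real-valued). Then ∑_{j=0}^{m−1} |B · f_N(b_j) − (g̃_σ ∗ f_N)(b_j)|² = m · ∑_{k=−N}^{N} |a_k|² · |B − ĥ_{σ,k}|², where b_j = −1 + (2j+1)/m and ĥ_{σ,k} = ∫_{−2}^{2} g̃_σ(u) e^{−iπku} du. -/
/-- Centerpoints `b_j = -1 + (2j+1)/m` of the `m` uniform bins partitioning `[-1,1]`. -/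
noncomputable def binCenter (m : ℕ) (j : ℤ) : ℝ := -1 + (2 * (j : ℝ) + 1) / m

/-- Trigonometric polynomial `f_N(z) = ∑_{k=-N}^{N} a_k e^{iπkz}`. -/
noncomputable def truncFourier (a : ℤ → ℂ) (N : ℕ) (z : ℝ) : ℂ :=
  ∑ k ∈ Finset.Icc (-(N : ℤ)) (N : ℤ),
    a k * Complex.exp (Complex.I * (Real.pi : ℂ) * (k : ℂ) * (z : ℂ))

open Complex Finset MeasureTheory
open scoped Real ComplexConjugate

/-! Convolution with a filter `g` over `[-2,2]` acts on each mode `e^{iπkz}` as multiplication by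
the scalar `ĥ_k`, so the residual `B f_N − g̃ ∗ f_N` is again a trigonometric polynomial of degree `N`, with coefficients
`a_k (B − ĥ_k)`. Because `2N < m`, a difference `k − l` of two frequencies is divisible by `m` only
when `k = l`; hence the modes are orthogonal on the `m` bin centres (a sum over all powers of a
nontrivial `m`-th root of unity vanishes), and the discrete Parseval identity finishes the proof. -/

/-- The paper's `ĥ_{σ,k}` for `g = g̃_σ`. -/
noncomputable def filterMultiplier (g : ℝ → ℂ) (k : ℤ) : ℂ :=
  ∫ u in (-2 : ℝ)..2, g u * exp (-I * π * k * u)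

theorem geom_sum_eq_zero_of_pow_eq_one {K : Type*} [Field K] {ξ : K} {n : ℕ}
    (hξ : ξ ≠ 1) (hξn : ξ ^ n = 1) : ∑ j ∈ range n, ξ ^ j = 0 := by
  rw [geom_sum_eq hξ, hξn, sub_self, zero_div]

theorem sum_exp_binCenter_eq_zero {m : ℕ} {d : ℤ} (hd : d ≠ 0) (hdm : d.natAbs < m) :
    ∑ j ∈ range m, exp (I * π * d * binCenter m j) = 0 := by
  have hm : m ≠ 0 := by omega
  have hζ := isPrimitiveRoot_exp m hm
  have hterm : ∀ j : ℕ, exp (I * π * d * binCenter m j) =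
      exp (I * π * d * (1 / m - 1)) * (exp (2 * π * I / m) ^ d) ^ j := by
    intro j
    rw [← exp_int_mul, ← exp_nat_mul, ← exp_add]
    congr 1
    simp only [binCenter]
    push_cast
    field_simp
    ring
  have hξ : exp (2 * π * I / m) ^ d ≠ 1 := fun h =>
    hd (Int.eq_zero_of_dvd_of_natAbs_lt_natAbs ((hζ.zpow_eq_one_iff_dvd d).mp h) hdm)
  have hξm : (exp (2 * π * I / m) ^ d) ^ m = 1 := by
    rw [← zpow_natCast, ← zpow_mul, mul_comm d, zpow_mul, zpow_natCast, hζ.pow_eq_one, one_zpow]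
  simp only [hterm, ← mul_sum, geom_sum_eq_zero_of_pow_eq_one hξ hξm, mul_zero]

theorem sum_exp_mul_conj_exp_binCenter {m N : ℕ} (hNm : 2 * N < m) {k l : ℤ}
    (hk : k ∈ Icc (-(N : ℤ)) N) (hl : l ∈ Icc (-(N : ℤ)) N) :
    ∑ j ∈ range m, exp (I * π * k * binCenter m j) * conj (exp (I * π * l * binCenter m j)) =
      if k = l then (m : ℂ) else 0 := by
  have hexp : ∀ j : ℕ, exp (I * π * k * binCenter m j) * conj (exp (I * π * l * binCenter m j)) =
      exp (I * π * (k - l : ℤ) * binCenter m j) := by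
    intro j
    rw [← exp_conj, ← exp_add]
    congr 1
    simp only [map_mul, conj_I, conj_ofReal, map_intCast]
    push_cast
    ring
  simp only [hexp]
  rw [mem_Icc] at hk hl
  split_ifs with hkl
  · simp [hkl]
  · exact sum_exp_binCenter_eq_zero (sub_ne_zero.mpr hkl) (by omega)

theorem sum_norm_sq_sum_mul_of_orthogonal {ι κ : Type*} [DecidableEq ι] (s : Finset ι)
    (t : Finset κ) (e : ι → κ → ℂ) (M : ℝ)
    (he : ∀ k ∈ s, ∀ l ∈ s, ∑ j ∈ t, e k j * conj (e l j) = if k = l then (M : ℂ) else 0)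
    (c : ι → ℂ) :
    ∑ j ∈ t, ‖∑ k ∈ s, c k * e k j‖ ^ 2 = M * ∑ k ∈ s, ‖c k‖ ^ 2 := by
  apply ofReal_injective
  push_cast
  simp only [← mul_conj']
  calc ∑ j ∈ t, (∑ k ∈ s, c k * e k j) * conj (∑ l ∈ s, c l * e l j)
      = ∑ k ∈ s, ∑ l ∈ s, c k * conj (c l) * ∑ j ∈ t, e k j * conj (e l j) := by
        simp only [map_sum, map_mul, sum_mul_sum]
        simp only [mul_sum]
        rw [sum_comm]
        refine sum_congr rfl fun k _ => ?_
        rw [sum_comm]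
        exact sum_congr rfl fun l _ => sum_congr rfl fun j _ => by ring
    _ = M * ∑ k ∈ s, c k * conj (c k) := by
        rw [mul_sum]
        refine sum_congr rfl fun k hk => ?_
        rw [sum_congr rfl fun l hl => by rw [he k hk l hl]]
        simp [hk, mul_comm]

theorem sum_norm_sq_truncFourier_binCenter {m N : ℕ} (hNm : 2 * N < m) (c : ℤ → ℂ) :
    ∑ j ∈ range m, ‖truncFourier c N (binCenter m j)‖ ^ 2 =
      m * ∑ k ∈ Icc (-(N : ℤ)) N, ‖c k‖ ^ 2 :=
  sum_norm_sq_sum_mul_of_orthogonal _ _ (fun (k : ℤ) (j : ℕ) => exp (I * π * k * binCenter m j)) m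
    (fun _ hk _ hl => by rw [sum_exp_mul_conj_exp_binCenter hNm hk hl, ofReal_natCast]) c

theorem integral_mul_truncFourier_sub {g : ℝ → ℂ} (hg : IntervalIntegrable g volume (-2) 2)
    (a : ℤ → ℂ) (N : ℕ) (z : ℝ) :
    ∫ u in (-2 : ℝ)..2, g u * truncFourier a N (z - u) =
      truncFourier (fun k => a k * filterMultiplier g k) N z := by
  have hmode : ∀ (k : ℤ) (u : ℝ), exp (I * π * k * (z - u : ℝ)) =
      exp (I * π * k * z) * exp (-I * π * k * u) := by
    intro k u
    rw [← exp_add]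
    congr 1
    push_cast
    ring
  simp only [truncFourier, mul_sum, hmode]
  rw [intervalIntegral.integral_finsetSum]
  · refine sum_congr rfl fun k _ => ?_
    rw [filterMultiplier, ← intervalIntegral.integral_const_mul,
      ← intervalIntegral.integral_mul_const]
    exact intervalIntegral.integral_congr fun u _ => by ring
  · intro k _
    exact hg.mul_continuousOn (Continuous.continuousOn (by fun_prop))

theorem continuous_contFilter (m : ℕ) (σ : ℝ) : Continuous (contFilter m σ) := by
  unfold contFilter G
  fun_prop

theorem l2_identity_filtered_trigPoly_general
    (m N : ℕ) (hNm : 2 * N < m) (σ : ℝ) (B : ℝ)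
    (a : ℤ → ℂ) :
    ∑ j ∈ Finset.range m,
        ‖((B : ℂ) * truncFourier a N (binCenter m j)
          - ∫ u in (-2 : ℝ)..2,
              (contFilter m σ u : ℂ) * truncFourier a N (binCenter m j - u))‖ ^ 2 =
      (m : ℝ) * ∑ k ∈ Finset.Icc (-(N : ℤ)) (N : ℤ),
        ‖a k‖ ^ 2 *
          ‖((B : ℂ) - ∫ u in (-2 : ℝ)..2,
              (contFilter m σ u : ℂ) *
                Complex.exp (-(Complex.I) * (Real.pi : ℂ) * (k : ℂ) * (u : ℂ)))‖ ^ 2 := by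
  have hg : IntervalIntegrable (fun u => (contFilter m σ u : ℂ)) volume (-2) 2 :=
    (continuous_ofReal.comp (continuous_contFilter m σ)).intervalIntegrable _ _
  have hresidual : ∀ z : ℝ, (B : ℂ) * truncFourier a N z -
        ∫ u in (-2 : ℝ)..2, (contFilter m σ u : ℂ) * truncFourier a N (z - u) =
      truncFourier (fun k => a k * (B - filterMultiplier (fun u => contFilter m σ u) k)) N z := by
    intro z
    rw [integral_mul_truncFourier_sub hg]
    simp only [truncFourier, mul_sum, ← sum_sub_distrib]
    exact sum_congr rfl fun k _ => by ring
  simp only [hresidual, sum_norm_sq_truncFourier_binCenter hNm, norm_mul, mul_pow]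
  rfl

/-- key ℓ² identity in Lemma B.4: for `N < m/2`,
`∑_{j=0}^{m-1} |B f_N(b_j) - (g̃_σ ∗ f_N)(b_j)|² = m ∑_{k=-N}^{N} |a_k|² |B - ĥ_{σ,k}|²`,
where `ĥ_{σ,k} = ∫_{-2}^{2} g̃_σ(u) e^{-iπku} du`. -/
theorem l2_identity_filtered_trigPoly
    (m N : ℕ) (hN : 0 < N) (hNm : 2 * N < m) (σ : ℝ) (hσ : 0 < σ) (B : ℝ)
    (a : ℤ → ℂ) (hconj : ∀ k : ℤ, a (-k) = starRingEnd ℂ (a k)) :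
    ∑ j ∈ Finset.range m,
        ‖((B : ℂ) * truncFourier a N (binCenter m j)
          - ∫ u in (-2 : ℝ)..2,
              (contFilter m σ u : ℂ) * truncFourier a N (binCenter m j - u))‖ ^ 2 =
      (m : ℝ) * ∑ k ∈ Finset.Icc (-(N : ℤ)) (N : ℤ),
        ‖a k‖ ^ 2 *
          ‖((B : ℂ) - ∫ u in (-2 : ℝ)..2,
              (contFilter m σ u : ℂ) *
                Complex.exp (-(Complex.I) * (Real.pi : ℂ) * (k : ℂ) * (u : ℂ)))‖ ^ 2 :=
  l2_identity_filtered_trigPoly_general m N hNm σ B a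
end
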